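/- arXiv:math/0202173 — 6 statements merged into one kernel-verified Lean document; each statement's English description precedes it below -/
import Mathlib

section
/- Let η ∈ ℂ be a primitive 5th root of unity and let C = {(v0 : v1 : v2) ∈ ℙ²(ℂ) : v0⁵ + v1·v2⁴ + v2·v1⁴ = 0}. The projective automorphism σ of ℙ²(ℂ) induced by the invertible linear map (v0, v1, v2) ↦ (v0, η·v1, η·v2) maps C into itself, and the fixed points of σ lying on C are exactly the points of C with v0 = 0, namely the five points (0:0:1), (0:1:0), (0:−1:1), (0:−ζ:1), (0:−ζ²:1), where ζ is a primitive cube root of unity. -/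
/-!
A point `(v₀ : v₁ : v₂)` is fixed by `σ` exactly when `v` is an eigenvector of
`diag(1, η, η)`, i.e. when `v₀ = 0` or `v₁ = v₂ = 0`; on the quintic the second case forces
`v₀⁵ = 0` as well. With `v₀ = 0` the equation becomes `v₁ v₂ (v₁³ + v₂³) = 0`, whose solutions
are `(0:1:0)`, `(0:0:1)` and `(0:b:1)` with `(-b)³ = 1`. Invariance of the quintic holds because
every monomial has degree `5` in `(v₁, v₂)` or none, and `η⁵ = 1`.
-/

/-- The point `(0 : b : 1)` of `ℙ²(ℂ)`. -/
noncomputable def ptb (b : ℂ) : Projectivization ℂ (Fin 3 → ℂ) :=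
  Projectivization.mk ℂ ![0, b, 1] (by intro h; simpa using congrFun h 2)

/-- The point `(0 : 1 : 0)` of `ℙ²(ℂ)`. -/
noncomputable def pt010 : Projectivization ℂ (Fin 3 → ℂ) :=
  Projectivization.mk ℂ ![0, 1, 0] (by intro h; simpa using congrFun h 1)

open scoped LinearAlgebra.Projectivization

open Projectivization

section ZeroSet

variable {K V : Type*} [Field K] [AddCommGroup V] [Module K V]

def zeroSet (f : V → K) : Set (ℙ K V) :=
  {p | ∀ (v : V) (hv : v ≠ 0), mk K v hv = p → f v = 0}

theorem mk_mem_zeroSet_iff {f : V → K} (hf : ∀ (a : K) (v : V), f v = 0 → f (a • v) = 0)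
    {v : V} (hv : v ≠ 0) : mk K v hv ∈ zeroSet f ↔ f v = 0 := by
  refine ⟨fun h => h v hv rfl, fun h w hw hwv => ?_⟩
  obtain ⟨a, rfl⟩ := (mk_eq_mk_iff' K w v hw hv).1 hwv
  exact hf a v h

theorem mem_zeroSet_iff {f : V → K} (hf : ∀ (a : K) (v : V), f v = 0 → f (a • v) = 0)
    (p : ℙ K V) : p ∈ zeroSet f ↔ f p.rep = 0 := by
  conv_lhs => rw [← p.mk_rep]
  exact mk_mem_zeroSet_iff hf p.rep_nonzero

end ZeroSet

section Plane

variable {K : Type*} [Field K]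

theorem smul_apply_eq_zero {n : ℕ} (i : Fin n) (a : K) (v : Fin n → K) (h : v i = 0) :
    (a • v) i = 0 := by
  simp [h]

def diag (η : K) (v : Fin 3 → K) : Fin 3 → K := fun i => ![(1 : K), η, η] i * v i

theorem diag_ne_zero {η : K} (hη : η ≠ 0) {v : Fin 3 → K} (hv : v ≠ 0) : diag η v ≠ 0 := by
  intro h
  apply hv
  funext i
  have := congrFun h i
  fin_cases i <;> simp_all [diag]

theorem mk_diag_eq_mk_iff {η : K} (hη : η ≠ 1) {v : Fin 3 → K} (hv : v ≠ 0)
    (hv' : diag η v ≠ 0) : mk K (diag η v) hv' = mk K v hv ↔ v 0 = 0 ∨ (v 1 = 0 ∧ v 2 = 0) := by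
  rw [mk_eq_mk_iff' K _ _ hv' hv]
  constructor
  · rintro ⟨a, ha⟩
    have h0 : a * v 0 = v 0 := by simpa [diag] using congrFun ha 0
    have h1 : a * v 1 = η * v 1 := by simpa [diag] using congrFun ha 1
    have h2 : a * v 2 = η * v 2 := by simpa [diag] using congrFun ha 2
    refine or_iff_not_imp_left.2 fun hv0 => ?_
    obtain rfl : a = 1 := (mul_eq_right₀ hv0).1 h0
    exact ⟨(mul_eq_mul_right_iff.1 h1).resolve_left hη.symm,
      (mul_eq_mul_right_iff.1 h2).resolve_left hη.symm⟩
  · rintro (h0 | ⟨h1, h2⟩)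
    · exact ⟨η, by funext i; fin_cases i <;> simp [diag, h0]⟩
    · exact ⟨1, by funext i; fin_cases i <;> simp [diag, h1, h2]⟩

def quintic (v : Fin 3 → K) : K := v 0 ^ 5 + v 1 * v 2 ^ 4 + v 2 * v 1 ^ 4

theorem quintic_smul (a : K) (v : Fin 3 → K) : quintic (a • v) = a ^ 5 * quintic v := by
  simp only [quintic, Pi.smul_apply, smul_eq_mul]
  ring

theorem quintic_smul_eq_zero (a : K) (v : Fin 3 → K) (h : quintic v = 0) :
    quintic (a • v) = 0 := by
  rw [quintic_smul, h, mul_zero]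

theorem quintic_diag {η : K} (hη : η ^ 5 = 1) (v : Fin 3 → K) :
    quintic (diag η v) = quintic v := by
  simp only [quintic, diag, Matrix.cons_val_zero, Matrix.cons_val_one, Matrix.cons_val_two,
    Matrix.head_cons, Matrix.tail_cons]
  linear_combination (v 1 * v 2 ^ 4 + v 2 * v 1 ^ 4) * hη

theorem mk_diag_eq_mk_iff_of_quintic_eq_zero {η : K} (hη : η ≠ 1) {v : Fin 3 → K}
    (hv : v ≠ 0) (hv' : diag η v ≠ 0) (hq : quintic v = 0) :
    mk K (diag η v) hv' = mk K v hv ↔ v 0 = 0 := by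
  rw [mk_diag_eq_mk_iff hη hv hv', or_iff_left_of_imp]
  rintro ⟨h1, h2⟩
  simpa [quintic, h1, h2] using hq

end Plane

theorem neg_pow_three_eq_one_iff {K : Type*} [CommRing K] [IsDomain K] {ζ : K}
    (hζ : IsPrimitiveRoot ζ 3) (b : K) : (-b) ^ 3 = 1 ↔ b = -1 ∨ b = -ζ ∨ b = -ζ ^ 2 := by
  constructor
  · intro hb
    obtain ⟨i, hi, hζb⟩ := hζ.eq_pow_of_pow_eq_one hb
    interval_cases i <;> [left; (right; left); (right; right)] <;>
      linear_combination hζb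
  · rintro (rfl | rfl | rfl)
    · ring
    · linear_combination hζ.pow_eq_one
    · linear_combination (ζ ^ 3 + 1) * hζ.pow_eq_one

theorem add_pow_four_eq_zero_iff {K : Type*} [CommRing K] [IsDomain K] {ζ : K}
    (hζ : IsPrimitiveRoot ζ 3) (b : K) :
    b + b ^ 4 = 0 ↔ b = 0 ∨ b = -1 ∨ b = -ζ ∨ b = -ζ ^ 2 := by
  rw [← neg_pow_three_eq_one_iff hζ, show b + b ^ 4 = b * (1 - (-b) ^ 3) by ring, mul_eq_zero,
    sub_eq_zero, eq_comm (a := (1 : K))]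

theorem ptb_mem_zeroSet_quintic_iff (b : ℂ) : ptb b ∈ zeroSet quintic ↔ b + b ^ 4 = 0 := by
  rw [ptb, mk_mem_zeroSet_iff quintic_smul_eq_zero]
  simp [quintic]

theorem mk_eq_ptb {v : Fin 3 → ℂ} (hv : v ≠ 0) (h0 : v 0 = 0) (h2 : v 2 ≠ 0) :
    mk ℂ v hv = ptb (v 1 / v 2) := by
  rw [ptb, mk_eq_mk_iff' ℂ _ _ hv]
  refine ⟨v 2, funext fun i => ?_⟩
  fin_cases i <;> simp [h0, mul_div_cancel₀ _ h2]

theorem mk_eq_pt010 {v : Fin 3 → ℂ} (hv : v ≠ 0) (h0 : v 0 = 0) (h2 : v 2 = 0) :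
    mk ℂ v hv = pt010 := by
  rw [pt010, mk_eq_mk_iff' ℂ _ _ hv]
  refine ⟨v 1, funext fun i => ?_⟩
  fin_cases i <;> simp [h0, h2]

theorem zeroSet_quintic_inter_zeroSet_coord_zero {ζ : ℂ} (hζ : IsPrimitiveRoot ζ 3) :
    zeroSet quintic ∩ zeroSet (fun v : Fin 3 → ℂ => v 0) =
      {ptb 0, pt010, ptb (-1), ptb (-ζ), ptb (-ζ ^ 2)} := by
  have hptb : ∀ b, b + b ^ 4 = 0 → ptb b ∈ zeroSet quintic ∩ zeroSet (fun v : Fin 3 → ℂ => v 0) :=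
    fun b hb => ⟨(ptb_mem_zeroSet_quintic_iff b).2 hb,
      (mk_mem_zeroSet_iff (smul_apply_eq_zero 0) _).2 rfl⟩
  ext p
  constructor
  · rintro ⟨hq, h0⟩
    rw [mem_zeroSet_iff (smul_apply_eq_zero 0)] at h0
    rw [← p.mk_rep] at hq ⊢
    by_cases h2 : p.rep 2 = 0
    · exact .inr <| .inl <| mk_eq_pt010 _ h0 h2
    · rw [mk_eq_ptb _ h0 h2] at hq ⊢
      rw [ptb_mem_zeroSet_quintic_iff, add_pow_four_eq_zero_iff hζ] at hq
      rcases hq with hb | hb | hb | hb <;> simp [hb]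
  · rintro (rfl | rfl | rfl | rfl | rfl)
    case inr.inl =>
      rw [pt010, Set.mem_inter_iff, mk_mem_zeroSet_iff quintic_smul_eq_zero,
        mk_mem_zeroSet_iff (smul_apply_eq_zero 0)]
      simp [quintic]
    all_goals exact hptb _ ((add_pow_four_eq_zero_iff hζ _).2 (by simp))

/-- Let `η` be a primitive 5th root of unity and `C ⊂ ℙ²(ℂ)` the plane quintic
`v0⁵ + v1 v2⁴ + v2 v1⁴ = 0`.  The projective automorphism `σ` induced by
`(v0, v1, v2) ↦ (v0, η v1, η v2)` maps `C` into itself, and the fixed points of `σ`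
on `C` are exactly the points of `C` with `v0 = 0`, namely the five points
`(0:0:1), (0:1:0), (0:−1:1), (0:−ζ:1), (0:−ζ²:1)` with `ζ` a primitive cube root
of unity. -/
theorem sigma_fixed_points_on_quintic (η ζ : ℂ)
    (hη : IsPrimitiveRoot η 5) (hζ : IsPrimitiveRoot ζ 3)
    (C : Set (Projectivization ℂ (Fin 3 → ℂ)))
    (hC : C = {p | ∀ (v : Fin 3 → ℂ) (hv : v ≠ 0), Projectivization.mk ℂ v hv = p →
        v 0 ^ 5 + v 1 * v 2 ^ 4 + v 2 * v 1 ^ 4 = 0})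
    (σ : Projectivization ℂ (Fin 3 → ℂ) → Projectivization ℂ (Fin 3 → ℂ))
    (hσ : ∀ (v : Fin 3 → ℂ) (hv : v ≠ 0)
        (hv' : (fun i => ![(1 : ℂ), η, η] i * v i) ≠ 0),
        σ (Projectivization.mk ℂ v hv) =
          Projectivization.mk ℂ (fun i => ![(1 : ℂ), η, η] i * v i) hv') :
    (∀ p ∈ C, σ p ∈ C) ∧
    {p | p ∈ C ∧ σ p = p} =
      {p | p ∈ C ∧ ∀ (v : Fin 3 → ℂ) (hv : v ≠ 0),
        Projectivization.mk ℂ v hv = p → v 0 = 0} ∧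
    {p | p ∈ C ∧ σ p = p} =
      {ptb 0, pt010, ptb (-1), ptb (-ζ), ptb (-ζ ^ 2)} := by
  have hη0 : η ≠ 0 := hη.ne_zero (by norm_num)
  have hσ_rep (p : ℙ ℂ (Fin 3 → ℂ)) :
      σ p = mk ℂ (diag η p.rep) (diag_ne_zero hη0 p.rep_nonzero) := by
    conv_lhs => rw [← p.mk_rep]
    exact hσ _ _ _
  have hC' : C = zeroSet quintic := hC
  subst hC'
  have hfix : {p | p ∈ zeroSet quintic ∧ σ p = p} =
      zeroSet quintic ∩ zeroSet (fun v : Fin 3 → ℂ => v 0) := by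
    ext p
    refine and_congr_right fun hq => ?_
    rw [mem_zeroSet_iff quintic_smul_eq_zero] at hq
    rw [mem_zeroSet_iff (smul_apply_eq_zero 0), hσ_rep]
    conv_lhs => rhs; rw [← p.mk_rep]
    exact mk_diag_eq_mk_iff_of_quintic_eq_zero (hη.ne_one (by norm_num)) _ _ hq
  refine ⟨fun p hp => ?_, hfix, hfix.trans (zeroSet_quintic_inter_zeroSet_coord_zero hζ)⟩
  rw [mem_zeroSet_iff quintic_smul_eq_zero] at hp
  rw [hσ_rep, mk_mem_zeroSet_iff quintic_smul_eq_zero, quintic_diag hη.pow_eq_one, hp]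
end

section
/- The set of u ∈ ℂ for which there exist α, β ∈ ℂ with α³ + uα + 1 = 0 and β³ + uβ + 1 = 0 such that the element ((β/α)⁵, 1, α⁵, β⁻⁵, 1) of the group (ℂˣ)⁵ has finite order is countable. Consequently, for all u outside some countable subset of ℂ and any two roots α, β of z³ + uz + 1, the element ((β/α)⁵, 1, α⁵, β⁻⁵, 1) ∈ (ℂˣ)⁵ has infinite order. -/
/-!
If the tame symbol has finite order then so does its third entry `α⁵`, hence `α` is a root of
unity. A field has only countably many roots of unity, and `u = -(α³ + 1)/α` is determined by
the root `α`, so only countably many `u` occur.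
-/

theorem countable_setOf_isOfFinOrder_units (R : Type*) [CommRing R] [IsDomain R] :
    {x : Rˣ | IsOfFinOrder x}.Countable := by
  have hsub : {x : Rˣ | IsOfFinOrder x} ⊆ ⋃ n : ℕ, (rootsOfUnity (n + 1) R : Set Rˣ) := by
    intro x hx
    obtain ⟨n, hn, hxn⟩ := isOfFinOrder_iff_pow_eq_one.1 hx
    refine Set.mem_iUnion.2 ⟨n - 1, ?_⟩
    simp [mem_rootsOfUnity, Nat.sub_add_cancel hn, hxn]
  exact .mono hsub <| Set.countable_iUnion fun n =>
    (Set.finite_coe_iff.mp (inferInstanceAs (Finite (rootsOfUnity (n + 1) R)))).countable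

theorem countable_setOf_isOfFinOrder_root_cubic (K : Type*) [Field K] :
    {u : K | ∃ (α : K) (hα : α ≠ 0),
      α ^ 3 + u * α + 1 = 0 ∧ IsOfFinOrder (Units.mk0 α hα)}.Countable := by
  refine ((countable_setOf_isOfFinOrder_units K).image
    fun α : Kˣ => -((α : K) ^ 3 + 1) / α).mono ?_
  rintro u ⟨α, hα, hroot, hfin⟩
  refine ⟨Units.mk0 α hα, hfin, ?_⟩
  simp only [Units.val_mk0]
  field_simp
  linear_combination -hroot

/-- The tame symbol `T(z, (z - α)/(z - β))` on `Z₁`, evaluated at the points `P₁, …, P₅`. -/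
def tameSymbol {G : Type*} [Group G] (α β : G) : Fin 5 → G :=
  ![(β / α) ^ 5, 1, α ^ 5, β⁻¹ ^ 5, 1]

theorem IsOfFinOrder.of_tameSymbol {G : Type*} [Group G] {α β : G}
    (h : IsOfFinOrder (tameSymbol α β)) : IsOfFinOrder α :=
  (h.apply 2).of_pow (by norm_num)

/-- The set of `u ∈ ℂ` for which there exist roots `α, β` of `z³ + uz + 1` such that
the tame symbol `((β/α)⁵, 1, α⁵, β⁻⁵, 1) ∈ (ℂˣ)⁵` has finite order is countable;
consequently, outside this countable set the tame symbol has infinite order for any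
two roots `α, β`. -/
theorem tame_symbol_infinite_order_off_countable :
    {u : ℂ | ∃ (α β : ℂ) (hα : α ≠ 0) (hβ : β ≠ 0),
        α ^ 3 + u * α + 1 = 0 ∧ β ^ 3 + u * β + 1 = 0 ∧
        IsOfFinOrder (![(Units.mk0 β hβ / Units.mk0 α hα) ^ 5, 1,
          (Units.mk0 α hα) ^ 5, ((Units.mk0 β hβ)⁻¹) ^ 5, 1] : Fin 5 → ℂˣ)}.Countable ∧
    ∀ u : ℂ,
      u ∉ {u : ℂ | ∃ (α β : ℂ) (hα : α ≠ 0) (hβ : β ≠ 0),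
        α ^ 3 + u * α + 1 = 0 ∧ β ^ 3 + u * β + 1 = 0 ∧
        IsOfFinOrder (![(Units.mk0 β hβ / Units.mk0 α hα) ^ 5, 1,
          (Units.mk0 α hα) ^ 5, ((Units.mk0 β hβ)⁻¹) ^ 5, 1] : Fin 5 → ℂˣ)} →
      ∀ (α β : ℂ) (hα : α ≠ 0) (hβ : β ≠ 0),
        α ^ 3 + u * α + 1 = 0 → β ^ 3 + u * β + 1 = 0 →
        ¬ IsOfFinOrder (![(Units.mk0 β hβ / Units.mk0 α hα) ^ 5, 1,
          (Units.mk0 α hα) ^ 5, ((Units.mk0 β hβ)⁻¹) ^ 5, 1] : Fin 5 → ℂˣ) := by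
  constructor
  · refine (countable_setOf_isOfFinOrder_root_cubic ℂ).mono ?_
    rintro u ⟨α, β, hα, hβ, hroot, -, hfin⟩
    exact ⟨α, hα, hroot, IsOfFinOrder.of_tameSymbol (β := Units.mk0 β hβ) hfin⟩
  · exact fun u hu α β hα hβ hα' hβ' hfin => hu ⟨α, β, hα, hβ, hα', hβ', hfin⟩
end

section
/- Let u ∈ ℂ with 4u³ + 27 ≠ 0 and let a, b, c be the three pairwise distinct, nonzero roots of z³ + uz + 1. The ℂ-linear map L : ℂ⁴ → ℂ⁵ defined by L(a0, a1, a2, a3) = (a0, q(a)/(a(a−b)(a−c)), q(b)/(b(b−a)(b−c)), q(c)/(c(c−a)(c−b)), −a3), where q(z) = a0 + a1·z + a2·z² + a3·z³, is injective and its image is exactly the hyperplane {(c1, c2, c3, c4, c5) ∈ ℂ⁵ : c1 + c2 + c3 + c4 + c5 = 0}. -/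
/-!
The components of `L v` are the residues of `q(z) dz / (z (z - a) (z - b) (z - c))` at
`0, a, b, c, ∞` (the residue at `0` is `q(0) / (-abc) = v 0` because `abc = -1`), so they sum to
zero; in partial-fraction form this is the Lagrange identity
`∑ q(r) / ∏_{s ≠ r} (r - s) = leading coefficient of q` over the four nodes `0, a, b, c`.
The components at `0` and `∞` recover `v 0` and `v 3`, and those at `a` and `b` then determine
`v 1` and `v 2` through the invertible Vandermonde-type system `x₁ z + x₂ z² = q(z) - v 0 - v 3 z³`,
`z ∈ {a, b}`. Solving the same system shows that every point of the hyperplane is attained, the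
component at `c` being forced by the residue theorem.
-/

namespace ResidueMap

variable {K : Type*} [Field K]

def cubic (v : Fin 4 → K) (z : K) : K := v 0 + v 1 * z + v 2 * z ^ 2 + v 3 * z ^ 3

def residueMap (a b c : K) (v : Fin 4 → K) : Fin 5 → K :=
  ![v 0, cubic v a / (a * (a - b) * (a - c)), cubic v b / (b * (b - a) * (b - c)),
    cubic v c / (c * (c - a) * (c - b)), -v 3]

theorem sum_div_prod_sub_eq_leading_coeff {a b c : K}
    (hab : a ≠ b) (hac : a ≠ c) (hbc : b ≠ c) (ha : a ≠ 0) (hb : b ≠ 0) (hc : c ≠ 0)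
    (v : Fin 4 → K) :
    v 0 / (-(a * b * c)) + cubic v a / (a * (a - b) * (a - c))
      + cubic v b / (b * (b - a) * (b - c)) + cubic v c / (c * (c - a) * (c - b)) = v 3 := by
  simp only [cubic]
  field_simp
  ring

theorem eq_of_mul_add_mul_sq_eq {a b x₁ x₂ y₁ y₂ : K} (hab : a ≠ b) (ha : a ≠ 0) (hb : b ≠ 0)
    (hxa : x₁ * a + x₂ * a ^ 2 = y₁ * a + y₂ * a ^ 2)
    (hxb : x₁ * b + x₂ * b ^ 2 = y₁ * b + y₂ * b ^ 2) :
    x₁ = y₁ ∧ x₂ = y₂ := by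
  have h₂ : (x₂ - y₂) * (a * b * (a - b)) = 0 := by linear_combination b * hxa - a * hxb
  have e₂ : x₂ = y₂ := by simpa [sub_eq_zero, ha, hb, hab] using h₂
  have h₁ : (x₁ - y₁) * a = 0 := by linear_combination hxa - a ^ 2 * e₂
  exact ⟨by simpa [sub_eq_zero, ha] using h₁, e₂⟩

theorem exists_mul_add_mul_sq_eq {a b : K} (hab : a ≠ b) (ha : a ≠ 0) (hb : b ≠ 0) (A B : K) :
    ∃ x₁ x₂ : K, x₁ * a + x₂ * a ^ 2 = A ∧ x₁ * b + x₂ * b ^ 2 = B := by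
  refine ⟨(a ^ 2 * B - b ^ 2 * A) / (a * b * (a - b)), (b * A - a * B) / (a * b * (a - b)), ?_, ?_⟩
  all_goals field_simp; ring

theorem residueMap_sum_eq_zero {a b c : K}
    (hab : a ≠ b) (hac : a ≠ c) (hbc : b ≠ c) (ha : a ≠ 0) (hb : b ≠ 0) (hc : c ≠ 0)
    (habc : a * b * c = -1) (v : Fin 4 → K) :
    let w := residueMap a b c v
    w 0 + w 1 + w 2 + w 3 + w 4 = 0 := by
  have h := sum_div_prod_sub_eq_leading_coeff hab hac hbc ha hb hc v
  rw [habc, neg_neg, div_one] at h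
  simp only [residueMap, Matrix.cons_val_zero, Matrix.cons_val_one, Matrix.cons_val]
  linear_combination h

theorem residueMap_injective {a b c : K}
    (hab : a ≠ b) (hac : a ≠ c) (hbc : b ≠ c) (ha : a ≠ 0) (hb : b ≠ 0) :
    Function.Injective (residueMap a b c) := by
  intro v w h
  have hda : a * (a - b) * (a - c) ≠ 0 := by simp [ha, sub_eq_zero, hab, hac]
  have hdb : b * (b - a) * (b - c) ≠ 0 := by simp [hb, sub_eq_zero, hab.symm, hbc]
  have e₀ : v 0 = w 0 := congrFun h 0
  have e₃ : v 3 = w 3 := neg_injective (congrFun h 4)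
  have qa : cubic v a = cubic w a := (div_left_inj' hda).mp (congrFun h 1)
  have qb : cubic v b = cubic w b := (div_left_inj' hdb).mp (congrFun h 2)
  obtain ⟨e₁, e₂⟩ := eq_of_mul_add_mul_sq_eq (x₁ := v 1) (x₂ := v 2) (y₁ := w 1) (y₂ := w 2)
    hab ha hb
    (by unfold cubic at qa; linear_combination qa - e₀ - a ^ 3 * e₃)
    (by unfold cubic at qb; linear_combination qb - e₀ - b ^ 3 * e₃)
  ext i
  fin_cases i <;> assumption

theorem range_residueMap {a b c : K}
    (hab : a ≠ b) (hac : a ≠ c) (hbc : b ≠ c) (ha : a ≠ 0) (hb : b ≠ 0) (hc : c ≠ 0)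
    (habc : a * b * c = -1) :
    Set.range (residueMap a b c) = {w | w 0 + w 1 + w 2 + w 3 + w 4 = 0} := by
  ext w
  refine ⟨?_, fun (hw : w 0 + w 1 + w 2 + w 3 + w 4 = 0) => ?_⟩
  · rintro ⟨v, rfl⟩
    exact residueMap_sum_eq_zero hab hac hbc ha hb hc habc v
  have hda : a * (a - b) * (a - c) ≠ 0 := by simp [ha, sub_eq_zero, hab, hac]
  have hdb : b * (b - a) * (b - c) ≠ 0 := by simp [hb, sub_eq_zero, hab.symm, hbc]
  obtain ⟨x₁, x₂, hxa, hxb⟩ := exists_mul_add_mul_sq_eq hab ha hb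
    (w 1 * (a * (a - b) * (a - c)) - w 0 + w 4 * a ^ 3)
    (w 2 * (b * (b - a) * (b - c)) - w 0 + w 4 * b ^ 3)
  set v : Fin 4 → K := ![w 0, x₁, x₂, -w 4]
  have hq (z : K) : cubic v z = w 0 + x₁ * z + x₂ * z ^ 2 - w 4 * z ^ 3 := by
    show w 0 + x₁ * z + x₂ * z ^ 2 + -w 4 * z ^ 3 = _
    ring
  have h₁ : residueMap a b c v 1 = w 1 := by
    show cubic v a / _ = w 1
    rw [hq, div_eq_iff hda]
    linear_combination hxa
  have h₂ : residueMap a b c v 2 = w 2 := by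
    show cubic v b / _ = w 2
    rw [hq, div_eq_iff hdb]
    linear_combination hxb
  have h₀ : residueMap a b c v 0 = w 0 := rfl
  have h₄ : residueMap a b c v 4 = w 4 := neg_neg (w 4)
  have h₃ : residueMap a b c v 3 = w 3 := by
    linear_combination residueMap_sum_eq_zero hab hac hbc ha hb hc habc v - hw - h₀ - h₁ - h₂ - h₄
  refine ⟨v, funext fun i => ?_⟩
  fin_cases i
  exacts [h₀, h₁, h₂, h₃, h₄]

end ResidueMap

theorem residue_map_injective_image_hyperplane_general (u a b c : ℂ)
    (hab : a ≠ b) (hac : a ≠ c) (hbc : b ≠ c)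
    (ha : a ≠ 0) (hb : b ≠ 0) (hc : c ≠ 0)
    (hroots : ∀ z : ℂ, z ^ 3 + u * z + 1 = (z - a) * (z - b) * (z - c))
    (L : (Fin 4 → ℂ) → (Fin 5 → ℂ))
    (hL : ∀ v : Fin 4 → ℂ, L v = ![v 0,
      (v 0 + v 1 * a + v 2 * a ^ 2 + v 3 * a ^ 3) / (a * (a - b) * (a - c)),
      (v 0 + v 1 * b + v 2 * b ^ 2 + v 3 * b ^ 3) / (b * (b - a) * (b - c)),
      (v 0 + v 1 * c + v 2 * c ^ 2 + v 3 * c ^ 3) / (c * (c - a) * (c - b)),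
      -(v 3)]) :
    Function.Injective L ∧
    Set.range L = {w : Fin 5 → ℂ | w 0 + w 1 + w 2 + w 3 + w 4 = 0} := by
  have habc : a * b * c = -1 := by linear_combination hroots 0
  obtain rfl : L = ResidueMap.residueMap a b c := funext hL
  exact ⟨ResidueMap.residueMap_injective hab hac hbc ha hb,
    ResidueMap.range_residueMap hab hac hbc ha hb hc habc⟩

/-- Let `a, b, c` be the three pairwise distinct, nonzero roots of `z³ + uz + 1`
(`4u³ + 27 ≠ 0`). The linear map `L : ℂ⁴ → ℂ⁵` of residues
`L(a0,a1,a2,a3) = (a0, q(a)/(a(a−b)(a−c)), q(b)/(b(b−a)(b−c)), q(c)/(c(c−a)(c−b)), −a3)`,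
with `q(z) = a0 + a1 z + a2 z² + a3 z³`, is injective with image exactly the
hyperplane `{c1 + c2 + c3 + c4 + c5 = 0}`. -/
theorem residue_map_injective_image_hyperplane (u a b c : ℂ)
    (hu : 4 * u ^ 3 + 27 ≠ 0)
    (hab : a ≠ b) (hac : a ≠ c) (hbc : b ≠ c)
    (ha : a ≠ 0) (hb : b ≠ 0) (hc : c ≠ 0)
    (hroots : ∀ z : ℂ, z ^ 3 + u * z + 1 = (z - a) * (z - b) * (z - c))
    (L : (Fin 4 → ℂ) → (Fin 5 → ℂ))
    (hL : ∀ v : Fin 4 → ℂ, L v = ![v 0,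
      (v 0 + v 1 * a + v 2 * a ^ 2 + v 3 * a ^ 3) / (a * (a - b) * (a - c)),
      (v 0 + v 1 * b + v 2 * b ^ 2 + v 3 * b ^ 3) / (b * (b - a) * (b - c)),
      (v 0 + v 1 * c + v 2 * c ^ 2 + v 3 * c ^ 3) / (c * (c - a) * (c - b)),
      -(v 3)]) :
    Function.Injective L ∧
    Set.range L = {w : Fin 5 → ℂ | w 0 + w 1 + w 2 + w 3 + w 4 = 0} :=
  residue_map_injective_image_hyperplane_general u a b c hab hac hbc ha hb hc hroots L hL
end

section
/- In ℂ[x0,x1,x2,x3], let I be the ideal generated by x0x1⁴ + 4x0⁴x2, 4x0x1³ + x2⁴, 4x1x2³ + x0⁴, and 5x3⁵ + 4x1⁴x3. Then for all homogeneous polynomials G0, G3 of degree 2, the polynomial (52x2³ + x0·G0 + x3·G3)·x1⁴x3 does not belong to I. -/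
/-!
Consider the linear functional
`λ = -4·[x2³x3⁵] + 5·[x1⁴x2³x3] + 80·[x0³x2⁴x3] - 20·[x0⁴x1³x3]`
on `ℂ[x0,x1,x2,x3]`, where `[m]` is the coefficient of the monomial `m`. Each generator of `I`
is a binomial `c·m + c'·m'`, and whenever `t·m` or `t·m'` is one of the four monomials of `λ`
for a monomial `t`, so is the other, with weights `w, w'` satisfying `c·w + c'·w' = 0`; hence
`λ` vanishes on `I`. None of the four monomials is divisible by `x0x1⁴x3` or `x1⁴x3²`, so `λ`
ignores `x0·G0` and `x3·G3`, while `λ(52x1⁴x2³x3) = 260 ≠ 0`.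
-/

open MvPolynomial

theorem map_eq_zero_of_mem_ideal_span {R M F : Type*} [CommSemiring R] [AddCommMonoid M]
    [FunLike F R M] [AddMonoidHomClass F R M] (φ : F) {S : Set R}
    (hS : ∀ g ∈ S, ∀ q, φ (q * g) = 0) {p : R} (hp : p ∈ Ideal.span S) : φ p = 0 := by
  suffices ∀ q, φ (q * p) = 0 by simpa using this 1
  induction hp using Submodule.span_induction with
  | mem g hg => exact hS g hg
  | zero => simp
  | add x y _ _ hx hy => intro q; rw [mul_add, map_add, hx, hy, add_zero]
  | smul a x _ hx => intro q; rw [smul_eq_mul, ← mul_assoc]; exact hx _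

noncomputable def expo (a b c d : ℕ) : Fin 4 →₀ ℕ := Finsupp.equivFunOnFinite.symm ![a, b, c, d]

theorem expo_le_expo {a b c d a' b' c' d' : ℕ} :
    expo a b c d ≤ expo a' b' c' d' ↔ a ≤ a' ∧ b ≤ b' ∧ c ≤ c' ∧ d ≤ d' := by
  simp [expo, Finsupp.le_def, Fin.forall_fin_succ]

theorem expo_sub_expo (a b c d a' b' c' d' : ℕ) :
    expo a b c d - expo a' b' c' d' = expo (a - a') (b - b') (c - c') (d - d') := by
  ext i; fin_cases i <;> rfl

theorem expo_inj {a b c d a' b' c' d' : ℕ} :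
    expo a b c d = expo a' b' c' d' ↔ a = a' ∧ b = b' ∧ c = c' ∧ d = d' := by
  simp [expo, funext_iff, Fin.forall_fin_succ]

theorem monomial_expo {R : Type*} [CommSemiring R] (a b c d : ℕ) (r : R) :
    monomial (expo a b c d) r = C r * X 0 ^ a * X 1 ^ b * X 2 ^ c * X 3 ^ d := by
  rw [monomial_eq, Finsupp.prod_fintype _ _ (by simp), Fin.prod_univ_four]
  simp [expo, mul_assoc]

noncomputable def separatingFunctional : MvPolynomial (Fin 4) ℂ →ₗ[ℂ] ℂ :=
  (-4 : ℂ) • lcoeff ℂ (expo 0 0 3 5) + (5 : ℂ) • lcoeff ℂ (expo 0 4 3 1)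
    + (80 : ℂ) • lcoeff ℂ (expo 3 0 4 1) - (20 : ℂ) • lcoeff ℂ (expo 4 3 0 1)

theorem separatingFunctional_mul_monomial (q : MvPolynomial (Fin 4) ℂ) (e : Fin 4 →₀ ℕ) (r : ℂ) :
    separatingFunctional (q * monomial e r)
      = -4 * (if e ≤ expo 0 0 3 5 then coeff (expo 0 0 3 5 - e) q * r else 0)
        + 5 * (if e ≤ expo 0 4 3 1 then coeff (expo 0 4 3 1 - e) q * r else 0)
        + 80 * (if e ≤ expo 3 0 4 1 then coeff (expo 3 0 4 1 - e) q * r else 0)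
        - 20 * (if e ≤ expo 4 3 0 1 then coeff (expo 4 3 0 1 - e) q * r else 0) := by
  simp only [separatingFunctional, LinearMap.sub_apply, LinearMap.add_apply, LinearMap.smul_apply,
    lcoeff_apply, coeff_mul_monomial', smul_eq_mul]

theorem generators_eq_binomials :
    ({X 0 * X 1 ^ 4 + 4 * X 0 ^ 4 * X 2, 4 * X 0 * X 1 ^ 3 + X 2 ^ 4,
      4 * X 1 * X 2 ^ 3 + X 0 ^ 4, 5 * X 3 ^ 5 + 4 * X 1 ^ 4 * X 3} :
        Set (MvPolynomial (Fin 4) ℂ)) =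
      {monomial (expo 1 4 0 0) 1 + monomial (expo 4 0 1 0) 4,
        monomial (expo 1 3 0 0) 4 + monomial (expo 0 0 4 0) 1,
        monomial (expo 0 1 3 0) 4 + monomial (expo 4 0 0 0) 1,
        monomial (expo 0 0 0 5) 5 + monomial (expo 0 4 0 1) 4} := by
  simp only [monomial_expo, map_one, map_ofNat, pow_zero, pow_one, mul_one, one_mul]

theorem separatingFunctional_mul_generator :
    ∀ g ∈ ({X 0 * X 1 ^ 4 + 4 * X 0 ^ 4 * X 2, 4 * X 0 * X 1 ^ 3 + X 2 ^ 4,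
      4 * X 1 * X 2 ^ 3 + X 0 ^ 4, 5 * X 3 ^ 5 + 4 * X 1 ^ 4 * X 3} :
        Set (MvPolynomial (Fin 4) ℂ)),
      ∀ q, separatingFunctional (q * g) = 0 := by
  simp only [generators_eq_binomials, Set.mem_insert_iff, Set.mem_singleton_iff]
  rintro g (rfl | rfl | rfl | rfl) q <;>
  · simp only [mul_add, map_add, separatingFunctional_mul_monomial, expo_le_expo, expo_sub_expo]
    norm_num <;> ring

theorem separatingFunctional_target (G0 G3 : MvPolynomial (Fin 4) ℂ) :
    separatingFunctional ((52 * X 2 ^ 3 + X 0 * G0 + X 3 * G3) * X 1 ^ 4 * X 3) = 260 := by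
  have hmonomials : (52 * X 2 ^ 3 + X 0 * G0 + X 3 * G3) * X 1 ^ 4 * X 3
      = monomial (expo 0 4 3 1) 52 + G0 * monomial (expo 1 4 0 1) 1
        + G3 * monomial (expo 0 4 0 2) 1 := by
    simp only [monomial_expo, map_one, map_ofNat]; ring
  rw [hmonomials, map_add, map_add, separatingFunctional_mul_monomial, separatingFunctional_mul_monomial]
  norm_num [expo_le_expo, separatingFunctional, expo_inj]

/-- In `ℂ[x0,x1,x2,x3]`, with `I = (x0x1⁴ + 4x0⁴x2, 4x0x1³ + x2⁴, 4x1x2³ + x0⁴,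
5x3⁵ + 4x1⁴x3)`, for all homogeneous quadrics `G0, G3`, the polynomial
`(52x2³ + x0·G0 + x3·G3)·x1⁴x3` does not belong to `I`. -/
theorem lifted_residue_solution_not_in_ideal (I : Ideal (MvPolynomial (Fin 4) ℂ))
    (hI : I = Ideal.span {X 0 * X 1 ^ 4 + 4 * X 0 ^ 4 * X 2,
      4 * X 0 * X 1 ^ 3 + X 2 ^ 4,
      4 * X 1 * X 2 ^ 3 + X 0 ^ 4,
      5 * X 3 ^ 5 + 4 * X 1 ^ 4 * X 3}) :
    ∀ G0 G3 : MvPolynomial (Fin 4) ℂ, G0.IsHomogeneous 2 → G3.IsHomogeneous 2 →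
      (52 * X 2 ^ 3 + X 0 * G0 + X 3 * G3) * X 1 ^ 4 * X 3 ∉ I := by
  intro G0 G3 _ _ hmem
  rw [hI] at hmem
  have hvanish := map_eq_zero_of_mem_ideal_span separatingFunctional
    separatingFunctional_mul_generator hmem
  rw [separatingFunctional_target] at hvanish
  norm_num at hvanish
end

section
/- Let F = y⁴ + xzy² + x⁴ − z⁴ ∈ ℂ[x,y,z], with partial derivatives F_x = y²z + 4x³, F_y = 4y³ + 2xyz, F_z = xy² − 4z³. Let H₄ be the ℂ-vector space of homogeneous polynomials of degree 4 in x, y, z, and let W ⊆ H₄ be the subspace {A·F_x + B·F_y + C·F_z : A, B, C homogeneous linear forms in x, y, z}. Then the images of the six monomials x²yz, xy z², x⁴, x³z, x²z², xz³ form a basis of the quotient vector space H₄/W; in particular dim_ℂ(H₄/W) = 6. -/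
open MvPolynomial

/-!
`W` is spanned by the nine products `x_i·F_j`, each a binomial in the fifteen quartic monomials.
Taken in a suitable order, each of these relations eliminates one quartic monomial outside the six
chosen ones, so the six span `H₄/W`. Conversely, comparing coefficients in
`∑ cᵢ mᵢ = A·F_x + B·F_y + D·F_z` gives a triangular linear system forcing all `cᵢ = 0`.
-/

namespace MvPolynomial

variable {σ R : Type*} [CommSemiring R]

theorem IsHomogeneous.exists_sum_smul_X_eq [Fintype σ] {φ : MvPolynomial σ R}
    (hφ : φ.IsHomogeneous 1) : ∃ a : σ → R, ∑ i, a i • X i = φ := by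
  rw [← Submodule.mem_span_range_iff_exists_fun, ← homogeneousSubmodule_one_eq_span_X]
  exact hφ

theorem linearIndependent_prod_X_pow [Fintype σ] {ι : Type*} {e : ι → σ → ℕ}
    (he : Function.Injective e) :
    LinearIndependent R (fun k => ∏ i, (X i : MvPolynomial σ R) ^ e k i) := by
  convert (basisMonomials σ R).linearIndependent.comp _
    (Finsupp.equivFunOnFinite.symm.injective.comp he) with k
  simp [monomial_eq, Finsupp.prod_fintype]

theorem homogeneousSubmodule_le_of_prod_X_pow_mem [Fintype σ]
    {S : Submodule R (MvPolynomial σ R)} {n : ℕ}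
    (h : ∀ e : σ → ℕ, ∑ i, e i = n → ∏ i, X i ^ e i ∈ S) :
    homogeneousSubmodule σ R n ≤ S := by
  rw [homogeneousSubmodule_eq_finsupp_supported, AddMonoidAlgebra.supported_eq_span_single,
    Submodule.span_le]
  rintro _ ⟨d, hd, rfl⟩
  simpa [single_eq_monomial, monomial_eq, Finsupp.prod_fintype]
    using h d (by simpa [Finsupp.degree_eq_sum] using hd)

end MvPolynomial

namespace Submodule

theorem mem_of_zsmul_eq_add_zsmul {K M : Type*} [DivisionRing K] [CharZero K]
    [AddCommGroup M] [Module K M] {S : Submodule K M} {n k : ℤ} (hn : n ≠ 0) {u v w : M}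
    (h : n • u = v + k • w) (hv : v ∈ S) (hw : w ∈ S) : u ∈ S := by
  rw [← S.smul_mem_iff (Int.cast_ne_zero.mpr hn : (n : K) ≠ 0), Int.cast_smul_eq_zsmul, h]
  exact S.add_mem hv (zsmul_mem hw k)

theorem finrank_quotient_comap_subtype_eq {K V ι : Type*} [DivisionRing K]
    [AddCommGroup V] [Module K V] [Fintype ι] {H W : Submodule K V} {v : ι → V}
    (hvH : ∀ i, v i ∈ H) (hli : ∀ c : ι → K, ∑ i, c i • v i ∈ W → c = 0)
    (hspan : H ≤ W ⊔ span K (Set.range v)) :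
    Module.finrank K (H ⧸ W.comap H.subtype) = Fintype.card ι := by
  let π := (W.comap H.subtype).mkQ
  let v' : ι → H := fun i => ⟨v i, hvH i⟩
  have hπ : ∀ c : ι → K, ∑ i, c i • π (v' i) = π (∑ i, c i • v' i) := by simp
  have hv' : ∀ c : ι → K, ((∑ i, c i • v' i : H) : V) = ∑ i, c i • v i := by simp [v']
  have hli' : LinearIndependent K (π ∘ v') := by
    refine Fintype.linearIndependent_iff.mpr fun c hc => congrFun (hli c ?_)
    rwa [Function.comp_def, hπ, mkQ_apply, Quotient.mk_eq_zero, mem_comap, subtype_apply,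
      hv'] at hc
  have hspan' : ⊤ ≤ span K (Set.range (π ∘ v')) := by
    rintro q -
    obtain ⟨⟨_, hh⟩, rfl⟩ := mkQ_surjective _ q
    obtain ⟨w, hw, _, hs, rfl⟩ := mem_sup.mp (hspan hh)
    obtain ⟨c, rfl⟩ := (mem_span_range_iff_exists_fun K).mp hs
    have hq : π ⟨w + ∑ i, c i • v i, hh⟩ = ∑ i, c i • π (v' i) := by
      rw [hπ, mkQ_apply, mkQ_apply, Quotient.eq, mem_comap, subtype_apply,
        AddSubgroupClass.coe_sub, hv', add_sub_cancel_right]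
      exact hw
    rw [hq]
    exact (mem_span_range_iff_exists_fun K).mpr ⟨c, rfl⟩
  exact Module.finrank_eq_card_basis (Module.Basis.mk hli' hspan')

end Submodule

namespace BiellipticQuartic

noncomputable def Fx : MvPolynomial (Fin 3) ℂ := X 1 ^ 2 * X 2 + 4 * X 0 ^ 3

noncomputable def Fy : MvPolynomial (Fin 3) ℂ := 4 * X 1 ^ 3 + 2 * X 0 * X 1 * X 2

noncomputable def Fz : MvPolynomial (Fin 3) ℂ := X 0 * X 1 ^ 2 - 4 * X 2 ^ 3

noncomputable def quotientMonomials : Fin 6 → MvPolynomial (Fin 3) ℂ :=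
  ![X 0 ^ 2 * X 1 * X 2, X 0 * X 1 * X 2 ^ 2, X 0 ^ 4, X 0 ^ 3 * X 2, X 0 ^ 2 * X 2 ^ 2,
    X 0 * X 2 ^ 3]

theorem isHomogeneous_quotientMonomials (i : Fin 6) : (quotientMonomials i).IsHomogeneous 4 := by
  have hX (j : Fin 3) : (X j : MvPolynomial (Fin 3) ℂ).IsHomogeneous 1 := isHomogeneous_X ℂ j
  have hXp := isHomogeneous_X_pow (R := ℂ) (σ := Fin 3)
  fin_cases i
  · exact ((hXp 0 2).mul (hX 1)).mul (hX 2)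
  · exact ((hX 0).mul (hX 1)).mul (hXp 2 2)
  · exact hXp 0 4
  · exact (hXp 0 3).mul (hX 2)
  · exact (hXp 0 2).mul (hXp 2 2)
  · exact (hX 0).mul (hXp 2 3)

theorem prod_X_pow_mem {S : Submodule ℂ (MvPolynomial (Fin 3) ℂ)}
    (hFx : ∀ i, X i * Fx ∈ S) (hFy : ∀ i, X i * Fy ∈ S) (hFz : ∀ i, X i * Fz ∈ S)
    (hm : ∀ i, quotientMonomials i ∈ S) {e : Fin 3 → ℕ} (he : ∑ i, e i = 4) :
    ∏ i, X i ^ e i ∈ S := by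
  simp only [quotientMonomials, Fin.forall_fin_succ, Matrix.cons_val_zero, Matrix.cons_val_succ,
    IsEmpty.forall_iff, and_true] at hm
  obtain ⟨x2yz, xyz2, x4, x3z, x2z2, xz3⟩ := hm
  have xy2z : X 0 * X 1 ^ 2 * X 2 ∈ S :=
    S.mem_of_zsmul_eq_add_zsmul (n := 1) (k := -4) one_ne_zero (by rw [Fx]; ring) (hFx 0) x4
  have y4 : X 1 ^ 4 ∈ S :=
    S.mem_of_zsmul_eq_add_zsmul (n := 4) (k := -2) four_ne_zero (by rw [Fy]; ring) (hFy 1) xy2z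
  have z4 : X 2 ^ 4 ∈ S :=
    S.mem_of_zsmul_eq_add_zsmul (n := 4) (k := -1) four_ne_zero (by rw [Fz]; ring) xy2z (hFz 2)
  have y3z : X 1 ^ 3 * X 2 ∈ S :=
    S.mem_of_zsmul_eq_add_zsmul (n := 4) (k := -2) four_ne_zero (by rw [Fy]; ring) (hFy 2) xyz2
  have x3y : X 0 ^ 3 * X 1 ∈ S :=
    S.mem_of_zsmul_eq_add_zsmul (n := 4) (k := -1) four_ne_zero (by rw [Fx]; ring) (hFx 1) y3z
  have y2z2 : X 1 ^ 2 * X 2 ^ 2 ∈ S :=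
    S.mem_of_zsmul_eq_add_zsmul (n := 1) (k := -4) one_ne_zero (by rw [Fx]; ring) (hFx 2) x3z
  have xy3 : X 0 * X 1 ^ 3 ∈ S :=
    S.mem_of_zsmul_eq_add_zsmul (n := 4) (k := -2) four_ne_zero (by rw [Fy]; ring) (hFy 0) x2yz
  have x2y2 : X 0 ^ 2 * X 1 ^ 2 ∈ S :=
    S.mem_of_zsmul_eq_add_zsmul (n := 1) (k := 4) one_ne_zero (by rw [Fz]; ring) (hFz 0) xz3
  have yz3 : X 1 * X 2 ^ 3 ∈ S :=
    S.mem_of_zsmul_eq_add_zsmul (n := 4) (k := -1) four_ne_zero (by rw [Fz]; ring) xy3 (hFz 1)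
  rw [Fin.prod_univ_three]
  rw [Fin.sum_univ_three] at he
  generalize e 0 = p, e 1 = q, e 2 = r at he
  obtain rfl : r = 4 - p - q := by omega
  have hp : p ≤ 4 := by omega
  have hq : q ≤ 4 - p := by omega
  interval_cases p <;> interval_cases q <;>
    simp only [Nat.reduceSub, pow_zero, pow_one, mul_one, one_mul, x4, x3y, x3z, x2y2, x2yz,
      x2z2, xy3, xy2z, xyz2, xz3, y4, y3z, y2z2, yz3, z4]

theorem eq_zero_of_sum_smul_quotientMonomials_eq {A B D : MvPolynomial (Fin 3) ℂ}
    (hA : A.IsHomogeneous 1) (hB : B.IsHomogeneous 1) (hD : D.IsHomogeneous 1) {c : Fin 6 → ℂ}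
    (h : ∑ i, c i • quotientMonomials i = A * Fx + B * Fy + D * Fz) : c = 0 := by
  obtain ⟨a, rfl⟩ := hA.exists_sum_smul_X_eq
  obtain ⟨b, rfl⟩ := hB.exists_sum_smul_X_eq
  obtain ⟨d, rfl⟩ := hD.exists_sum_smul_X_eq
  let E : Fin 15 → Fin 3 → ℕ := ![![4, 0, 0], ![3, 1, 0], ![3, 0, 1], ![2, 2, 0], ![2, 1, 1],
    ![2, 0, 2], ![1, 3, 0], ![1, 2, 1], ![1, 1, 2], ![1, 0, 3], ![0, 4, 0], ![0, 3, 1],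
    ![0, 2, 2], ![0, 1, 3], ![0, 0, 4]]
  -- `L k` is the coefficient of `∏ i, X i ^ E k i` in `∑ cᵢ mᵢ - (A Fx + B Fy + D Fz)`.
  let L : Fin 15 → ℂ := ![c 2 - 4 * a 0, -4 * a 1, c 3 - 4 * a 2, -d 0, c 0 - 2 * b 0, c 4,
    -4 * b 0 - d 1, -a 0 - 2 * b 1 - d 2, c 1 - 2 * b 2, c 5 + 4 * d 0, -4 * b 1,
    -a 1 - 4 * b 2, -a 2, 4 * d 1, 4 * d 2]
  have hE : Function.Injective E := by decide
  have hL : ∑ k, L k • ∏ i, (X i : MvPolynomial (Fin 3) ℂ) ^ E k i = 0 := by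
    simp only [Fin.sum_univ_succ, Fin.sum_univ_zero, Fin.prod_univ_three, quotientMonomials, Fx,
      Fy, Fz, E, L, Matrix.cons_val, Fin.reduceSucc, smul_eq_C_mul, map_sub, map_add, map_mul,
      map_neg, map_ofNat] at h ⊢
    linear_combination h
  have hcoeff := Fintype.linearIndependent_iff.mp (linearIndependent_prod_X_pow hE) L hL
  simp only [Fin.forall_fin_succ, L, Matrix.cons_val_zero, Matrix.cons_val_succ,
    IsEmpty.forall_iff, and_true] at hcoeff
  obtain ⟨x4, x3y, x3z, x2y2, x2yz, x2z2, xy3, xy2z, xyz2, xz3, y4, y3z, y2z2, yz3, z4⟩ := hcoeff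
  funext i
  fin_cases i <;> simp only [Fin.reduceFinMk, Fin.isValue, Pi.zero_apply]
  · linear_combination x2yz - xy3 / 2 - yz3 / 8
  · linear_combination xyz2 - y3z / 2 + x3y / 8
  · linear_combination x4 - 4 * xy2z + 2 * y4 - z4
  · linear_combination x3z - 4 * y2z2
  · linear_combination x2z2
  · linear_combination xz3 + 4 * x2y2

end BiellipticQuartic

/-- With `x = X 0`, `y = X 1`, `z = X 2` and `F = y⁴ + xzy² + x⁴ − z⁴`, partial
derivatives `Fx = y²z + 4x³`, `Fy = 4y³ + 2xyz`, `Fz = xy² − 4z³`: let `H₄` be the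
space of homogeneous quartics and `W = {A·Fx + B·Fy + C·Fz : A, B, C linear forms}`.
Then the images of `x²yz, xyz², x⁴, x³z, x²z², xz³` form a basis of `H₄/W`;
in particular `dim(H₄/W) = 6`. -/
theorem jacobian_ring_degree_four_basis
    (Fx Fy Fz : MvPolynomial (Fin 3) ℂ)
    (hFx : Fx = X 1 ^ 2 * X 2 + 4 * X 0 ^ 3)
    (hFy : Fy = 4 * X 1 ^ 3 + 2 * X 0 * X 1 * X 2)
    (hFz : Fz = X 0 * X 1 ^ 2 - 4 * X 2 ^ 3)
    (H4 : Submodule ℂ (MvPolynomial (Fin 3) ℂ))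
    (hH4 : H4 = MvPolynomial.homogeneousSubmodule (Fin 3) ℂ 4)
    (W : Submodule ℂ (MvPolynomial (Fin 3) ℂ))
    (hW : (W : Set (MvPolynomial (Fin 3) ℂ)) =
      {p | ∃ A B D : MvPolynomial (Fin 3) ℂ, A.IsHomogeneous 1 ∧ B.IsHomogeneous 1 ∧
        D.IsHomogeneous 1 ∧ p = A * Fx + B * Fy + D * Fz})
    (m : Fin 6 → MvPolynomial (Fin 3) ℂ)
    (hm : m = ![X 0 ^ 2 * X 1 * X 2, X 0 * X 1 * X 2 ^ 2, X 0 ^ 4, X 0 ^ 3 * X 2,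
      X 0 ^ 2 * X 2 ^ 2, X 0 * X 2 ^ 3]) :
    (∀ c : Fin 6 → ℂ, (∑ i, c i • m i) ∈ W → c = 0) ∧
    (H4 : Set (MvPolynomial (Fin 3) ℂ)) ⊆
      ↑(W ⊔ Submodule.span ℂ (Set.range m)) ∧
    Module.finrank ℂ (↥H4 ⧸ (W.comap H4.subtype)) = 6 := by
  obtain rfl : Fx = BiellipticQuartic.Fx := hFx
  obtain rfl : Fy = BiellipticQuartic.Fy := hFy
  obtain rfl : Fz = BiellipticQuartic.Fz := hFz
  obtain rfl : m = BiellipticQuartic.quotientMonomials := hm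
  subst hH4
  have mem_W (p : MvPolynomial (Fin 3) ℂ) := Set.ext_iff.mp hW p
  have indep (c : Fin 6 → ℂ) (hc : ∑ i, c i • BiellipticQuartic.quotientMonomials i ∈ W) :
      c = 0 := by
    obtain ⟨A, B, D, hA, hB, hD, h⟩ := (mem_W _).mp hc
    exact BiellipticQuartic.eq_zero_of_sum_smul_quotientMonomials_eq hA hB hD h
  have hX := isHomogeneous_X ℂ (σ := Fin 3)
  have h0 := isHomogeneous_zero (Fin 3) ℂ 1
  have span : homogeneousSubmodule (Fin 3) ℂ 4 ≤
      W ⊔ .span ℂ (Set.range BiellipticQuartic.quotientMonomials) :=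
    homogeneousSubmodule_le_of_prod_X_pow_mem fun _ =>
      BiellipticQuartic.prod_X_pow_mem
        (fun i => Submodule.mem_sup_left ((mem_W _).mpr ⟨X i, 0, 0, hX i, h0, h0, by ring⟩))
        (fun i => Submodule.mem_sup_left ((mem_W _).mpr ⟨0, X i, 0, h0, hX i, h0, by ring⟩))
        (fun i => Submodule.mem_sup_left ((mem_W _).mpr ⟨0, 0, X i, h0, h0, hX i, by ring⟩))
        (fun i => Submodule.mem_sup_right (Submodule.subset_span (Set.mem_range_self i)))
  refine ⟨indep, span, ?_⟩
  simpa using Submodule.finrank_quotient_comap_subtype_eq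
    BiellipticQuartic.isHomogeneous_quotientMonomials indep span
end

section
/- The three polynomials y²z + 4x³, 4y³ + 2xyz, xy² − 4z³ in ℂ[x,y,z] (the partial derivatives of F = y⁴ + xzy² + x⁴ − z⁴) have no common zero in ℂ³ other than the origin; consequently the plane quartic curve {F = 0} ⊂ ℙ²(ℂ) is smooth. -/
/-!
If `y ≠ 0`, the second partial forces `xz = -2y²`; substituting this into `x · ∂F/∂x` and
`z · ∂F/∂z` gives `x⁴ = y⁴/2` and `z⁴ = -y⁴/2`, so `(xz)⁴ = -y⁸/4`, while `(xz)⁴ = 16y⁸`.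
Hence `y = 0`, and then the first and third partials reduce to `x³ = 0` and `z³ = 0`.
-/

section

variable {K : Type*} [Field K] [CharZero K]

theorem y_eq_zero_of_bielliptic_partials {x y z : K}
    (h₁ : y ^ 2 * z + 4 * x ^ 3 = 0)
    (h₃ : x * y ^ 2 - 4 * z ^ 3 = 0)
    (hxz : x * z = -2 * y ^ 2) :
    y = 0 := by
  have hx : x ^ 4 = y ^ 4 / 2 := by linear_combination x * h₁ / 4 - y ^ 2 * hxz / 4
  have hz : z ^ 4 = -y ^ 4 / 2 := by linear_combination -z * h₃ / 4 + y ^ 2 * hxz / 4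
  have hxz₁ : (x * z) ^ 4 = 16 * y ^ 8 := by rw [hxz]; ring
  have hxz₂ : (x * z) ^ 4 = -y ^ 8 / 4 := by rw [mul_pow, hx, hz]; ring
  have hy8 : y ^ 8 = 0 := by linear_combination 4 / 65 * (hxz₂ - hxz₁)
  exact pow_eq_zero_iff (by norm_num) |>.mp hy8

theorem eq_zero_of_bielliptic_partials {x y z : K}
    (h₁ : y ^ 2 * z + 4 * x ^ 3 = 0)
    (h₂ : 4 * y ^ 3 + 2 * x * y * z = 0)
    (h₃ : x * y ^ 2 - 4 * z ^ 3 = 0) :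
    x = 0 ∧ y = 0 ∧ z = 0 := by
  have hy : y = 0 := by
    have hfactor : y * (x * z + 2 * y ^ 2) = 0 := by linear_combination h₂ / 2
    rcases mul_eq_zero.mp hfactor with hy | hxz
    · exact hy
    · exact y_eq_zero_of_bielliptic_partials h₁ h₃ (by linear_combination hxz)
  subst hy
  refine ⟨pow_eq_zero_iff three_ne_zero |>.mp ?_, rfl, pow_eq_zero_iff three_ne_zero |>.mp ?_⟩
  · linear_combination h₁ / 4
  · linear_combination -h₃ / 4

end

/-- The partial derivatives `y²z + 4x³`, `4y³ + 2xyz`, `xy² − 4z³` of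
`F = y⁴ + xzy² + x⁴ − z⁴` have no common zero in `ℂ³` other than the origin;
consequently at every point of `ℙ²(ℂ)` on the quartic curve `{F = 0}` the gradient
of `F` is nonzero, i.e. the curve is smooth. -/
theorem bielliptic_quartic_smooth :
    (∀ v : Fin 3 → ℂ,
      v 1 ^ 2 * v 2 + 4 * v 0 ^ 3 = 0 →
      4 * v 1 ^ 3 + 2 * v 0 * v 1 * v 2 = 0 →
      v 0 * v 1 ^ 2 - 4 * v 2 ^ 3 = 0 →
      v = 0) ∧
    ∀ v : Fin 3 → ℂ, v ≠ 0 →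
      v 1 ^ 4 + v 0 * v 2 * v 1 ^ 2 + v 0 ^ 4 - v 2 ^ 4 = 0 →
      ¬(v 1 ^ 2 * v 2 + 4 * v 0 ^ 3 = 0 ∧
        4 * v 1 ^ 3 + 2 * v 0 * v 1 * v 2 = 0 ∧
        v 0 * v 1 ^ 2 - 4 * v 2 ^ 3 = 0) := by
  have h_origin : ∀ v : Fin 3 → ℂ,
      v 1 ^ 2 * v 2 + 4 * v 0 ^ 3 = 0 →
      4 * v 1 ^ 3 + 2 * v 0 * v 1 * v 2 = 0 →
      v 0 * v 1 ^ 2 - 4 * v 2 ^ 3 = 0 → v = 0 := by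
    intro v h₁ h₂ h₃
    obtain ⟨hx, hy, hz⟩ := eq_zero_of_bielliptic_partials h₁ h₂ h₃
    ext i
    fin_cases i
    exacts [hx, hy, hz]
  exact ⟨h_origin, fun v hv _ ⟨h₁, h₂, h₃⟩ => hv (h_origin v h₁ h₂ h₃)⟩
end
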